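/- Let A ∈ ℝ^{m×n} and b ∈ ℝᵐ, and let s* be a global minimizer of s ↦ (1/2)‖s‖₂² + ‖b + A s‖₂. Then ‖b‖₂ − ‖b + A s*‖₂ ≥ ‖s*‖₂². -/

import Mathlib

/-!
Comparing the minimizer `s*` with the points `(1 - t) • s*` of the segment to `0`, convexity of
`s ↦ ‖b + A s‖` bounds the gain in the norm term by `t (‖b‖ - ‖b + A s*‖)`, while the quadratic
term gains `t (1 - t/2) ‖s*‖²`. Minimality forces the second to be at most the first; dividing by
`t` and letting `t → 0⁺` gives the claim.
-/

open Set Filter Topology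

section MinimizerOfHalfSqNormAdd

variable {E : Type*} [NormedAddCommGroup E] [NormedSpace ℝ E] {g : E → ℝ} {x : E}

theorem one_sub_half_mul_sq_norm_le_sub_of_isMinOn (hg : ConvexOn ℝ univ g)
    (hx : IsMinOn (fun y => 1 / 2 * ‖y‖ ^ 2 + g y) univ x) {t : ℝ} (ht₀ : 0 < t) (ht₁ : t ≤ 1) :
    (1 - t / 2) * ‖x‖ ^ 2 ≤ g 0 - g x := by
  have hmin : 1 / 2 * ‖x‖ ^ 2 + g x ≤ 1 / 2 * ‖(1 - t) • x‖ ^ 2 + g ((1 - t) • x) :=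
    isMinOn_univ_iff.mp hx _
  have hnorm : ‖(1 - t) • x‖ = (1 - t) * ‖x‖ := by
    rw [norm_smul, Real.norm_of_nonneg (by linarith)]
  have hconv : g ((1 - t) • x) ≤ (1 - t) * g x + t * g 0 := by
    simpa using hg.2 (mem_univ x) (mem_univ 0) (by linarith : 0 ≤ 1 - t) ht₀.le (by ring)
  rw [hnorm] at hmin
  have : t * ((1 - t / 2) * ‖x‖ ^ 2) ≤ t * (g 0 - g x) := by nlinarith
  exact le_of_mul_le_mul_left this ht₀

theorem sq_norm_le_sub_of_isMinOn (hg : ConvexOn ℝ univ g)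
    (hx : IsMinOn (fun y => 1 / 2 * ‖y‖ ^ 2 + g y) univ x) :
    ‖x‖ ^ 2 ≤ g 0 - g x := by
  have hlim : Tendsto (fun t : ℝ => (1 - t / 2) * ‖x‖ ^ 2) (𝓝[>] 0) (𝓝 (‖x‖ ^ 2)) := by
    have : Continuous fun t : ℝ => (1 - t / 2) * ‖x‖ ^ 2 := by fun_prop
    simpa using this.continuousWithinAt.tendsto (x := 0) (s := Ioi 0)
  refine le_of_tendsto hlim ?_
  filter_upwards [Ioc_mem_nhdsGT zero_lt_one] with t ht
  exact one_sub_half_mul_sq_norm_le_sub_of_isMinOn hg hx ht.1 ht.2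

end MinimizerOfHalfSqNormAdd

theorem convexOn_norm_add_linearMap {E F : Type*} [NormedAddCommGroup E] [NormedSpace ℝ E]
    [NormedAddCommGroup F] [NormedSpace ℝ F] (b : F) (L : E →ₗ[ℝ] F) :
    ConvexOn ℝ univ fun y => ‖b + L y‖ :=
  (convexOn_norm convex_univ).comp_affineMap (AffineMap.const ℝ E b + L.toAffineMap)

theorem stmt_8 {m n : ℕ} (A : Matrix (Fin m) (Fin n) ℝ) (b : EuclideanSpace ℝ (Fin m))
    (sstar : EuclideanSpace ℝ (Fin n))
    (hsstar : ∀ s : EuclideanSpace ℝ (Fin n),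
      1 / 2 * ‖sstar‖ ^ 2 + ‖b + Matrix.toEuclideanLin A sstar‖
        ≤ 1 / 2 * ‖s‖ ^ 2 + ‖b + Matrix.toEuclideanLin A s‖) :
    ‖b‖ - ‖b + Matrix.toEuclideanLin A sstar‖ ≥ ‖sstar‖ ^ 2 := by
  simpa using sq_norm_le_sub_of_isMinOn (convexOn_norm_add_linearMap b (Matrix.toEuclideanLin A))
    (isMinOn_univ_iff.mpr hsstar)
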